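/- arXiv:2201.10229 — 2 statements merged into one kernel-verified Lean document; each statement's English description precedes it below -/
import Mathlib

section
/- Let p be an odd prime and i ∈ ℤ. (1) In the 1-dimensional σ-hermitian space 𝐕^{an} = ℚ_{p²} with form {x,y} = x·σ(y), the unique ℤ_{p²}-lattice Λ' satisfying p^{i+1}(Λ')^∨ ⊆ Λ' ⊆ p^i(Λ')^∨ is Λ' = p^{⌊(i+1)/2⌋}ℤ_{p²}. (2) In the 2-dimensional σ-hermitian space 𝐕^{an} = ℚ_{p²}·f₀ ⊕ ℚ_{p²}·f₁ with form determined by {f₀,f₀} = 1, {f₁,f₁} = p, {f₀,f₁} = {f₁,f₀} = 0, the unique ℤ_{p²}-lattice Λ' satisfying p^{i+1}(Λ')^∨ ⊆ Λ' ⊆ p^i(Λ')^∨ is Λ' = p^{⌊(i+1)/2⌋}ℤ_{p²}·f₀ ⊕ p^{⌊i/2⌋}ℤ_{p²}·f₁. -/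
/-!
The hermitian space `𝐕 = ℚ_{p²}^n` of the unitary Rapoport–Zink space of signature
`(1,n-1)`, its lattices `𝓛_i` with their types, and the unitary similitude group
`J = GU(𝐕)`.  Here `ℤ_{p²} = W(𝔽_{p²})` and `ℚ_{p²}` is its fraction field; `σ` is
induced by the Witt vector Frobenius.  Writing `m = ⌊(n-1)/2⌋`, the basis
`e_{-m},…,e_{-1},e₀ˣ,e₁,…,e_m` (odd `n`), resp.
`e_{-m},…,e_{-1},e₀ˣ,e₁ˣ,e₁,…,e_m` (even `n`), is indexed by `Fin n` in this order,
and the Gram matrix of the σ-hermitian form `{·,·}` is the antidiagonal matrix for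
odd `n`, resp. the antidiagonal matrix with middle 2×2 block `diag(1,p)` for even `n`.
-/

noncomputable section

/-- `ℤ_{p²} = W(𝔽_{p²})`, the ring of Witt vectors of the field with `p²` elements. -/
abbrev Zp2 (p : ℕ) [Fact p.Prime] : Type := WittVector p (GaloisField p 2)

/-- `ℚ_{p²}`, the fraction field of `ℤ_{p²}`. -/
abbrev Qp2 (p : ℕ) [Fact p.Prime] : Type := FractionRing (Zp2 p)

/-- The Frobenius `σ` of `ℚ_{p²}`, induced by the Witt vector Frobenius. -/
def frob (p : ℕ) [Fact p.Prime] : Qp2 p ≃+* Qp2 p :=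
  IsFractionRing.ringEquivOfRingEquiv (WittVector.frobeniusEquiv p (GaloisField p 2))

/-- The Gram matrix of the σ-hermitian form `{·,·}` on `𝐕 = ℚ_{p²}^n` in the fixed
basis: for odd `n` it is the antidiagonal matrix; for even `n` the two middle basis
vectors `e₀ˣ, e₁ˣ` (at positions `(n-2)/2` and `(n-2)/2 + 1`) pair with themselves to
`1` and `p` respectively, and all other pairings are antidiagonal. -/
def gram (p n : ℕ) [Fact p.Prime] : Matrix (Fin n) (Fin n) (Qp2 p) :=
  Matrix.of fun i j =>
    if Odd n then (if (i : ℕ) + (j : ℕ) = n - 1 then 1 else 0)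
    else if (i : ℕ) = (n - 2) / 2 ∧ (j : ℕ) = (n - 2) / 2 then 1
    else if (i : ℕ) = (n - 2) / 2 + 1 ∧ (j : ℕ) = (n - 2) / 2 + 1 then (p : Qp2 p)
    else if (i : ℕ) + (j : ℕ) = n - 1 ∧ (i : ℕ) ≠ (n - 2) / 2 ∧ (i : ℕ) ≠ (n - 2) / 2 + 1 then 1
    else 0

/-- The nondegenerate σ-hermitian form `{x,y} = ∑ᵢⱼ xᵢ · gramᵢⱼ · σ(yⱼ)`
(σ-linear in the second variable). -/
def hform (p n : ℕ) [Fact p.Prime] (x y : Fin n → Qp2 p) : Qp2 p :=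
  ∑ i : Fin n, ∑ j : Fin n, x i * gram p n i j * frob p (y j)

/-- A lattice: a finitely generated `ℤ_{p²}`-submodule of `𝐕` containing a
`ℚ_{p²}`-basis of `𝐕`. -/
def IsLattice (p n : ℕ) [Fact p.Prime] (L : Submodule (Zp2 p) (Fin n → Qp2 p)) : Prop :=
  L.FG ∧ Submodule.span (Qp2 p) (L : Set (Fin n → Qp2 p)) = ⊤

/-- The dual lattice `M^∨ = {v : {v,w} ∈ ℤ_{p²} for all w ∈ M}`. -/
def dualLat (p n : ℕ) [Fact p.Prime] (L : Submodule (Zp2 p) (Fin n → Qp2 p)) :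
    Submodule (Zp2 p) (Fin n → Qp2 p) where
  carrier := {v | ∀ w ∈ L, hform p n v w ∈ (algebraMap (Zp2 p) (Qp2 p)).range}
  add_mem' := by
    intro a b ha hb w hw
    have h : hform p n (a + b) w = hform p n a w + hform p n b w := by
      simp [hform, add_mul, Finset.sum_add_distrib]
    rw [h]
    exact add_mem (ha w hw) (hb w hw)
  zero_mem' := by
    intro w hw
    have h : hform p n 0 w = 0 := by simp [hform]
    rw [h]
    exact zero_mem _
  smul_mem' := by
    intro c v hv w hw
    have h : hform p n (c • v) w = algebraMap (Zp2 p) (Qp2 p) c * hform p n v w := by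
      simp [hform, Finset.mul_sum, Algebra.smul_def, mul_assoc]
    rw [h]
    exact mul_mem (RingHom.mem_range_self _ c) (hv w hw)

/-- The scaled lattice `c · L = {c • x : x ∈ L}`. -/
def scaleLat (p n : ℕ) [Fact p.Prime] (c : Qp2 p) (L : Submodule (Zp2 p) (Fin n → Qp2 p)) :
    Submodule (Zp2 p) (Fin n → Qp2 p) :=
  L.map (LinearMap.restrictScalars (Zp2 p) (LinearMap.lsmul (Qp2 p) (Fin n → Qp2 p) c))

/-- `Λ ∈ 𝓛_i`:  `Λ` is a lattice with `p^{i+1}Λ^∨ ⊊ Λ ⊆ p^{i}Λ^∨`. -/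
def inL (p n : ℕ) [Fact p.Prime] (i : ℤ) (Λ : Submodule (Zp2 p) (Fin n → Qp2 p)) : Prop :=
  IsLattice p n Λ ∧
    scaleLat p n ((p : Qp2 p) ^ (i + 1)) (dualLat p n Λ) < Λ ∧
    Λ ≤ scaleLat p n ((p : Qp2 p) ^ i) (dualLat p n Λ)

/-- `Λ ∈ 𝓛 = ⋃_{ni even} 𝓛_i`. -/
def inLL (p n : ℕ) [Fact p.Prime] (Λ : Submodule (Zp2 p) (Fin n → Qp2 p)) : Prop :=
  ∃ i : ℤ, Even ((n : ℤ) * i) ∧ inL p n i Λ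

/-- The length of a `ℤ_{p²}`-module (the Krull dimension of its submodule lattice). -/
def mlen (p : ℕ) [Fact p.Prime] (M : Type) [AddCommGroup M] [Module (Zp2 p) M] : ℕ∞ :=
  WithBot.unbotD 0 (Order.krullDim (Submodule (Zp2 p) M))

/-- The index `[M₂ : M₁]`: the length of the `ℤ_{p²}`-module `M₂ / M₁` (for `M₁ ⊆ M₂`). -/
def relIdx (p n : ℕ) [Fact p.Prime] (M₁ M₂ : Submodule (Zp2 p) (Fin n → Qp2 p)) : ℕ∞ :=
  mlen p (M₂ ⧸ Submodule.comap M₂.subtype M₁)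

/-- The type `t(Λ) = [Λ : p^{i+1} Λ^∨]` of `Λ ∈ 𝓛_i`. -/
def typeOf (p n : ℕ) [Fact p.Prime] (i : ℤ) (Λ : Submodule (Zp2 p) (Fin n → Qp2 p)) : ℕ∞ :=
  relIdx p n (scaleLat p n ((p : Qp2 p) ^ (i + 1)) (dualLat p n Λ)) Λ

/-- `g ∈ J = GU(𝐕)`: a `ℚ_{p²}`-linear automorphism with `{gx,gy} = c(g)·{x,y}` for a
σ-fixed multiplier `c(g) ∈ ℚ_{p²}ˣ`. -/
def inJ (p n : ℕ) [Fact p.Prime] (g : (Fin n → Qp2 p) ≃ₗ[Qp2 p] (Fin n → Qp2 p)) : Prop :=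
  ∃ c : Qp2 p, c ≠ 0 ∧ frob p c = c ∧ ∀ x y, hform p n (g x) (g y) = c * hform p n x y

/-- The image `g(Λ)` of a lattice under a `ℚ_{p²}`-linear automorphism. -/
def mapLat (p n : ℕ) [Fact p.Prime] (g : (Fin n → Qp2 p) ≃ₗ[Qp2 p] (Fin n → Qp2 p))
    (Λ : Submodule (Zp2 p) (Fin n → Qp2 p)) : Submodule (Zp2 p) (Fin n → Qp2 p) :=
  Λ.map (LinearMap.restrictScalars (Zp2 p) g.toLinearMap)

/-- The lattice `Λ(a) = ⟨ p^{a j} e_j : j ⟩` with diagonal exponents `a : Fin n → ℤ`. -/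
def diagLat (p n : ℕ) [Fact p.Prime] (a : Fin n → ℤ) : Submodule (Zp2 p) (Fin n → Qp2 p) :=
  Submodule.span (Zp2 p)
    (Set.range fun j : Fin n => ((p : Qp2 p) ^ (a j)) • (Pi.single j 1 : Fin n → Qp2 p))

/-!
Every nonzero element of `ℚ_{p²}` is a unit of `ℤ_{p²}` times a power of `p`, and `σ` preserves
such a decomposition. Both forms are diagonal, `{x,y} = ∑ⱼ p^{εⱼ} xⱼ σ(yⱼ)` with `ε = 0`,
resp. `ε = (0,1)`, so the dual of the diagonal lattice `Λ(e) = ⊕ⱼ p^{eⱼ} ℤ_{p²}` is `Λ(-e-ε)`,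
and `p^{i+1}Λ(e)^∨ ⊆ Λ(e) ⊆ p^iΛ(e)^∨` holds exactly when `i ≤ 2eⱼ + εⱼ ≤ i+1` for all `j`.

Conversely, `Λ ⊆ p^iΛ^∨` gives `{x,x} ∈ p^iℤ_{p²}` for `x ∈ Λ`. The norm form is anisotropic
(its summands `p^{εⱼ} xⱼ σ(xⱼ)` have valuations of distinct parities), so `Λ ⊆ Λ(e)`. Dualizing,
`p^{i+1}Λ(e)^∨ ⊆ Λ`, and this already contains all basis vectors `p^{eⱼ}fⱼ` of `Λ(e)` except
possibly one, `p^{e_{j₀}}f_{j₀}`. If `Λ` lay in the lattice `M` obtained by raising `e_{j₀}` by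
one, then `p^{i+1}M^∨ ⊆ Λ ⊆ M` would force `2e_{j₀} + ε_{j₀} < i`; so some `w ∈ Λ` has a
`j₀`-coordinate of valuation exactly `e_{j₀}`, and subtracting its other coordinates (which lie in
`p^{i+1}Λ(e)^∨ ⊆ Λ`) yields the missing vector.
-/

section Valuation

variable {p : ℕ} [Fact p.Prime]

variable (p) in
lemma natCast_p_ne_zero : (p : Qp2 p) ≠ 0 := by
  rw [← map_natCast (algebraMap (Zp2 p) (Qp2 p))]
  exact (map_ne_zero_iff _ (IsFractionRing.injective _ _)).mpr (WittVector.irreducible p).ne_zero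

variable (p) in
def pPow (m : ℤ) : Submodule (Zp2 p) (Qp2 p) :=
  Submodule.span (Zp2 p) {(p : Qp2 p) ^ m}

lemma mem_pPow_iff {m : ℤ} {x : Qp2 p} :
    x ∈ pPow p m ↔ ∃ r : Zp2 p, algebraMap (Zp2 p) (Qp2 p) r * (p : Qp2 p) ^ m = x := by
  simp only [pPow, Submodule.mem_span_singleton, Algebra.smul_def]

lemma zpow_mem_pPow (m : ℤ) : (p : Qp2 p) ^ m ∈ pPow p m :=
  Submodule.mem_span_singleton_self _

lemma zpow_mul_mem_pPow_iff (k m : ℤ) (x : Qp2 p) :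
    (p : Qp2 p) ^ k * x ∈ pPow p m ↔ x ∈ pPow p (m - k) := by
  have hk : (p : Qp2 p) ^ k ≠ 0 := zpow_ne_zero _ (natCast_p_ne_zero p)
  simp only [mem_pPow_iff]
  refine exists_congr fun r => ?_
  rw [zpow_sub₀ (natCast_p_ne_zero p), ← mul_div_assoc, div_eq_iff hk, mul_comm x, eq_comm]

lemma mem_pPow_zero_iff {x : Qp2 p} :
    x ∈ pPow p 0 ↔ x ∈ (algebraMap (Zp2 p) (Qp2 p)).range := by
  simp [mem_pPow_iff]

lemma pPow_anti {m n : ℤ} (h : m ≤ n) : pPow p n ≤ pPow p m := by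
  have hn : (p : Qp2 p) ^ n = ((p : Zp2 p) ^ (n - m).toNat) • (p : Qp2 p) ^ m := by
    rw [Algebra.smul_def, map_pow, map_natCast, ← zpow_natCast,
      Int.toNat_of_nonneg (sub_nonneg.2 h), ← zpow_add₀ (natCast_p_ne_zero p), sub_add_cancel]
  rw [pPow, Submodule.span_le, Set.singleton_subset_iff, SetLike.mem_coe, hn]
  exact Submodule.smul_mem _ _ (zpow_mem_pPow m)

lemma mul_mem_pPow {m k : ℤ} {x y : Qp2 p} (hx : x ∈ pPow p m) (hy : y ∈ pPow p k) :
    x * y ∈ pPow p (m + k) := by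
  obtain ⟨r, rfl⟩ := mem_pPow_iff.1 hx
  obtain ⟨s, rfl⟩ := mem_pPow_iff.1 hy
  exact mem_pPow_iff.2 ⟨r * s, by rw [map_mul, zpow_add₀ (natCast_p_ne_zero p)]; ring⟩

lemma algebraMap_mem_pPow_natCast_iff (r : Zp2 p) (k : ℕ) :
    algebraMap (Zp2 p) (Qp2 p) r ∈ pPow p k ↔ (p : Zp2 p) ^ k ∣ r := by
  simp only [mem_pPow_iff, zpow_natCast, ← map_natCast (algebraMap (Zp2 p) (Qp2 p)), ← map_pow,
    ← map_mul, (IsFractionRing.injective (Zp2 p) (Qp2 p)).eq_iff, dvd_iff_exists_eq_mul_left]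
  exact exists_congr fun _ => eq_comm

lemma unit_mul_zpow_mem_pPow_iff (u : (Zp2 p)ˣ) {m γ : ℤ} :
    algebraMap (Zp2 p) (Qp2 p) u * (p : Qp2 p) ^ γ ∈ pPow p m ↔ m ≤ γ := by
  rw [mul_comm, zpow_mul_mem_pPow_iff]
  constructor
  · intro h
    by_contra hlt
    have h1 : algebraMap (Zp2 p) (Qp2 p) u ∈ pPow p ((1 : ℕ) : ℤ) := pPow_anti (by omega) h
    rw [algebraMap_mem_pPow_natCast_iff, pow_one] at h1
    exact (WittVector.irreducible p).not_isUnit (isUnit_of_dvd_unit h1 u.isUnit)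
  · intro h
    exact pPow_anti (by omega) (mem_pPow_zero_iff.2 ⟨u, rfl⟩)

lemma zpow_mem_pPow_iff {m γ : ℤ} : (p : Qp2 p) ^ γ ∈ pPow p m ↔ m ≤ γ := by
  simpa using unit_mul_zpow_mem_pPow_iff (p := p) 1 (m := m) (γ := γ)

lemma exists_eq_unit_mul_zpow {x : Qp2 p} (hx : x ≠ 0) :
    ∃ (u : (Zp2 p)ˣ) (γ : ℤ), x = algebraMap (Zp2 p) (Qp2 p) u * (p : Qp2 p) ^ γ := by
  obtain ⟨a, s, hs, rfl⟩ := IsFractionRing.div_surjective (Zp2 p) x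
  have ha : a ≠ 0 := by rintro rfl; simp at hx
  obtain ⟨m, u, rfl⟩ := WittVector.exists_eq_pow_p_mul' a ha
  obtain ⟨n, w, rfl⟩ := WittVector.exists_eq_pow_p_mul' s (nonZeroDivisors.ne_zero hs)
  refine ⟨u * w⁻¹, (m : ℤ) - n, ?_⟩
  have hw : algebraMap (Zp2 p) (Qp2 p) w ≠ 0 :=
    (map_ne_zero_iff _ (IsFractionRing.injective _ _)).mpr w.ne_zero
  simp only [map_mul, map_pow, map_natCast, Units.val_mul, zpow_sub₀ (natCast_p_ne_zero p),
    map_units_inv, zpow_natCast]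
  field_simp

lemma exists_eq_unit_mul_zpow_of_not_mem {m : ℤ} {x : Qp2 p} (hx : x ∈ pPow p m)
    (hx' : x ∉ pPow p (m + 1)) :
    ∃ u : (Zp2 p)ˣ, x = algebraMap (Zp2 p) (Qp2 p) u * (p : Qp2 p) ^ m := by
  obtain ⟨u, γ, rfl⟩ := exists_eq_unit_mul_zpow (ne_of_mem_of_not_mem (zero_mem _) hx').symm
  rw [unit_mul_zpow_mem_pPow_iff] at hx hx'
  exact ⟨u, by rw [show γ = m by omega]⟩

lemma add_mem_pPow_iff_of_ne {u w : (Zp2 p)ˣ} {j k m : ℤ} (hjk : j ≠ k) :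
    algebraMap (Zp2 p) (Qp2 p) u * (p : Qp2 p) ^ j +
        algebraMap (Zp2 p) (Qp2 p) w * (p : Qp2 p) ^ k ∈ pPow p m ↔ m ≤ j ∧ m ≤ k := by
  wlog hlt : j < k generalizing j k u w
  · rw [add_comm, this hjk.symm (lt_of_le_of_ne (not_lt.1 hlt) hjk.symm), and_comm]
  refine ⟨fun h => ?_, fun h => add_mem ((unit_mul_zpow_mem_pPow_iff u).2 h.1)
    ((unit_mul_zpow_mem_pPow_iff w).2 h.2)⟩
  by_contra hm
  have hk : algebraMap (Zp2 p) (Qp2 p) w * (p : Qp2 p) ^ k ∈ pPow p (j + 1) :=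
    (unit_mul_zpow_mem_pPow_iff w).2 (by omega)
  have hj := sub_mem (pPow_anti (by omega) h) hk
  rw [add_sub_cancel_right, unit_mul_zpow_mem_pPow_iff] at hj
  omega

lemma frob_algebraMap (r : Zp2 p) :
    frob p (algebraMap (Zp2 p) (Qp2 p) r) =
      algebraMap (Zp2 p) (Qp2 p) (WittVector.frobeniusEquiv p (GaloisField p 2) r) :=
  IsFractionRing.ringEquivOfRingEquiv_algebraMap _ r

lemma frob_zpow (γ : ℤ) : frob p ((p : Qp2 p) ^ γ) = (p : Qp2 p) ^ γ := by
  rw [map_zpow₀, map_natCast]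

lemma frob_mem_pPow {m : ℤ} {x : Qp2 p} (hx : x ∈ pPow p m) : frob p x ∈ pPow p m := by
  obtain ⟨r, rfl⟩ := mem_pPow_iff.1 hx
  exact mem_pPow_iff.2 ⟨WittVector.frobeniusEquiv p (GaloisField p 2) r, by
    rw [map_mul, frob_zpow, frob_algebraMap]⟩

lemma exists_unit_mul_zpow_mul_frob_self (u : (Zp2 p)ˣ) (γ : ℤ) : ∃ v : (Zp2 p)ˣ,
    algebraMap (Zp2 p) (Qp2 p) u * (p : Qp2 p) ^ γ *
        frob p (algebraMap (Zp2 p) (Qp2 p) u * (p : Qp2 p) ^ γ) =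
      algebraMap (Zp2 p) (Qp2 p) v * (p : Qp2 p) ^ (2 * γ) :=
  ⟨u * Units.map (WittVector.frobeniusEquiv p (GaloisField p 2) : Zp2 p →* Zp2 p) u, by
    rw [map_mul, frob_zpow, frob_algebraMap, Units.val_mul, map_mul, two_mul,
      zpow_add₀ (natCast_p_ne_zero p)]
    simp only [Units.coe_map, MonoidHom.coe_coe]
    ring⟩

lemma mul_frob_self_mem_pPow_iff (x : Qp2 p) (m : ℤ) :
    x * frob p x ∈ pPow p m ↔ x ∈ pPow p ((m + 1) / 2) := by
  rcases eq_or_ne x 0 with rfl | hx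
  · simp only [map_zero, mul_zero, zero_mem]
  obtain ⟨u, γ, rfl⟩ := exists_eq_unit_mul_zpow hx
  obtain ⟨v, hv⟩ := exists_unit_mul_zpow_mul_frob_self u γ
  rw [hv, unit_mul_zpow_mem_pPow_iff, unit_mul_zpow_mem_pPow_iff]
  omega

lemma mem_pPow_of_mul_frob_self_add_mem_pPow {x y : Qp2 p} {m : ℤ}
    (h : x * frob p x + p * (y * frob p y) ∈ pPow p m) :
    x ∈ pPow p ((m + 1) / 2) ∧ y ∈ pPow p (m / 2) := by
  suffices x * frob p x ∈ pPow p m ∧ (p : Qp2 p) ^ (1 : ℤ) * (y * frob p y) ∈ pPow p m by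
    obtain ⟨hx, hy⟩ := this
    rw [zpow_mul_mem_pPow_iff, mul_frob_self_mem_pPow_iff, sub_add_cancel] at hy
    exact ⟨(mul_frob_self_mem_pPow_iff x m).1 hx, hy⟩
  rw [zpow_one]
  rcases eq_or_ne x 0 with rfl | hx
  · simpa using h
  rcases eq_or_ne y 0 with rfl | hy
  · simpa using h
  obtain ⟨u, α, rfl⟩ := exists_eq_unit_mul_zpow hx
  obtain ⟨w, β, rfl⟩ := exists_eq_unit_mul_zpow hy
  obtain ⟨u', hu'⟩ := exists_unit_mul_zpow_mul_frob_self u α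
  obtain ⟨w', hw'⟩ := exists_unit_mul_zpow_mul_frob_self w β
  have hp : (p : Qp2 p) * (algebraMap (Zp2 p) (Qp2 p) w' * (p : Qp2 p) ^ (2 * β)) =
      algebraMap (Zp2 p) (Qp2 p) w' * (p : Qp2 p) ^ (2 * β + 1) := by
    rw [zpow_add_one₀ (natCast_p_ne_zero p)]; ring
  rw [hu', hw', hp] at h ⊢
  rw [unit_mul_zpow_mem_pPow_iff, unit_mul_zpow_mem_pPow_iff]
  exact (add_mem_pPow_iff_of_ne (by omega)).1 h

end Valuation

section Lattices

variable {p n : ℕ} [Fact p.Prime]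

lemma diagLat_eq_pi (e : Fin n → ℤ) :
    diagLat p n e = Submodule.pi Set.univ fun j => pPow p (e j) := by
  refine le_antisymm (Submodule.span_le.2 ?_) fun z hz => ?_
  · rintro _ ⟨k, rfl⟩ j -
    rcases eq_or_ne j k with rfl | hj
    · simpa using zpow_mem_pPow (e j)
    · simp [Pi.single_eq_of_ne hj]
  · rw [← Finset.univ_sum_single z]
    refine Submodule.sum_mem _ fun j _ => ?_
    obtain ⟨r, hr⟩ := mem_pPow_iff.1 (hz j (Set.mem_univ j))
    have hsingle : Pi.single j (z j) = r • ((p : Qp2 p) ^ e j • Pi.single j 1) := by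
      rw [← hr, ← Pi.single_smul, ← Pi.single_smul, smul_eq_mul, mul_one, Algebra.smul_def]
    rw [hsingle]
    exact Submodule.smul_mem _ _ (Submodule.subset_span ⟨j, rfl⟩)

lemma mem_diagLat_iff {e : Fin n → ℤ} {z : Fin n → Qp2 p} :
    z ∈ diagLat p n e ↔ ∀ j, z j ∈ pPow p (e j) := by
  simp [diagLat_eq_pi]

lemma diagLat_le_diagLat_iff {e e' : Fin n → ℤ} :
    diagLat p n e ≤ diagLat p n e' ↔ ∀ j, e' j ≤ e j := by
  refine ⟨fun h j => ?_, fun h z hz => mem_diagLat_iff.2 fun j =>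
    pPow_anti (h j) (mem_diagLat_iff.1 hz j)⟩
  have hj := mem_diagLat_iff.1 (h (Submodule.subset_span ⟨j, rfl⟩)) j
  simpa [zpow_mem_pPow_iff] using hj

lemma isLattice_diagLat (e : Fin n → ℤ) : IsLattice p n (diagLat p n e) := by
  refine ⟨Submodule.fg_span (Set.finite_range _), ?_⟩
  have hunit : ∀ j, IsUnit ((p : Qp2 p) ^ e j) :=
    fun j => (zpow_ne_zero _ (natCast_p_ne_zero p)).isUnit
  rw [diagLat, Submodule.span_span_of_tower,
    ← ((Pi.basisFun (Qp2 p) (Fin n)).isUnitSMul hunit).span_eq]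
  congr 1
  ext1 j
  simp [Module.Basis.isUnitSMul_apply]

lemma mem_scaleLat_iff {c : Qp2 p} (hc : c ≠ 0) {L : Submodule (Zp2 p) (Fin n → Qp2 p)}
    {z : Fin n → Qp2 p} : z ∈ scaleLat p n c L ↔ c⁻¹ • z ∈ L := by
  rw [scaleLat, Submodule.mem_map]
  constructor
  · rintro ⟨x, hx, rfl⟩
    simpa [smul_smul, inv_mul_cancel₀ hc] using hx
  · exact fun h => ⟨c⁻¹ • z, h, by simp [smul_smul, inv_mul_cancel₀ hc]⟩

lemma scaleLat_zpow_diagLat (k : ℤ) (e : Fin n → ℤ) :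
    scaleLat p n ((p : Qp2 p) ^ k) (diagLat p n e) = diagLat p n fun j => e j + k := by
  ext z
  simp only [mem_scaleLat_iff (zpow_ne_zero k (natCast_p_ne_zero p)), mem_diagLat_iff,
    Pi.smul_apply, smul_eq_mul, ← zpow_neg, zpow_mul_mem_pPow_iff, sub_neg_eq_add]

lemma scaleLat_mono {c : Qp2 p} {L M : Submodule (Zp2 p) (Fin n → Qp2 p)} (h : L ≤ M) :
    scaleLat p n c L ≤ scaleLat p n c M :=
  Submodule.map_mono h

lemma dualLat_antitone {L M : Submodule (Zp2 p) (Fin n → Qp2 p)} (h : L ≤ M) :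
    dualLat p n M ≤ dualLat p n L :=
  fun _ hv w hw => hv w (h hw)

lemma hform_smul_left (c : Qp2 p) (x y : Fin n → Qp2 p) :
    hform p n (c • x) y = c * hform p n x y := by
  simp [hform, Finset.mul_sum, mul_assoc]

lemma sub_single_mem_diagLat_update {e : Fin n → ℤ} {z : Fin n → Qp2 p} (hz : z ∈ diagLat p n e)
    (j₀ : Fin n) : z - Pi.single j₀ (z j₀) ∈ diagLat p n (Function.update e j₀ (e j₀ + 1)) := by
  refine mem_diagLat_iff.2 fun j => ?_
  rcases eq_or_ne j j₀ with rfl | hj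
  · simp
  · simpa [Function.update_of_ne hj, Pi.single_eq_of_ne hj] using mem_diagLat_iff.1 hz j

lemma diagLat_le_of_not_le_update {Λ : Submodule (Zp2 p) (Fin n → Qp2 p)} {e : Fin n → ℤ}
    {j₀ : Fin n} (hle : Λ ≤ diagLat p n e)
    (hge : diagLat p n (Function.update e j₀ (e j₀ + 1)) ≤ Λ)
    (hnot : ¬ Λ ≤ diagLat p n (Function.update e j₀ (e j₀ + 1))) : diagLat p n e ≤ Λ := by
  have hsingle_mem {z : Fin n → Qp2 p} (hzΛ : z ∈ Λ) : Pi.single j₀ (z j₀) ∈ Λ := by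
    simpa using Λ.sub_mem hzΛ (hge (sub_single_mem_diagLat_update (hle hzΛ) j₀))
  obtain ⟨w, hwΛ, hw⟩ := SetLike.not_le_iff_exists.1 hnot
  have hw₀ : w j₀ ∉ pPow p (e j₀ + 1) := fun h => hw <| by
    have hsingle : Pi.single j₀ (w j₀) ∈ diagLat p n (Function.update e j₀ (e j₀ + 1)) :=
      mem_diagLat_iff.2 fun j => by
        rcases eq_or_ne j j₀ with rfl | hj
        · simpa using h
        · simp [Pi.single_eq_of_ne hj]
    simpa using add_mem (sub_single_mem_diagLat_update (hle hwΛ) j₀) hsingle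
  obtain ⟨u, hu⟩ := exists_eq_unit_mul_zpow_of_not_mem (mem_diagLat_iff.1 (hle hwΛ) j₀) hw₀
  have hgen : Pi.single j₀ ((p : Qp2 p) ^ e j₀) ∈ Λ := by
    have h := Λ.smul_mem (↑u⁻¹ : Zp2 p) (hsingle_mem hwΛ)
    rwa [hu, ← Pi.single_smul, Algebra.smul_def, ← mul_assoc, ← map_mul, Units.inv_mul, map_one,
      one_mul] at h
  intro z hz
  obtain ⟨r, hr⟩ := mem_pPow_iff.1 (mem_diagLat_iff.1 hz j₀)
  have h := Λ.add_mem (hge (sub_single_mem_diagLat_update hz j₀)) (Λ.smul_mem r hgen)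
  rwa [← Pi.single_smul, Algebra.smul_def, hr, sub_add_cancel] at h

lemma hform_self_mem_pPow {i : ℤ} {Λ : Submodule (Zp2 p) (Fin n → Qp2 p)}
    (hΛ : Λ ≤ scaleLat p n ((p : Qp2 p) ^ i) (dualLat p n Λ)) {x : Fin n → Qp2 p} (hx : x ∈ Λ) :
    hform p n x x ∈ pPow p i := by
  have h := (mem_scaleLat_iff (zpow_ne_zero i (natCast_p_ne_zero p))).1 (hΛ hx) x hx
  rwa [hform_smul_left, ← mem_pPow_zero_iff, ← zpow_neg, zpow_mul_mem_pPow_iff, zero_sub,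
    neg_neg] at h

section Diagonal

variable {ε : Fin n → ℤ}

lemma hform_eq_sum
    (hgram : gram p n = Matrix.diagonal fun j => (p : Qp2 p) ^ ε j) (x y : Fin n → Qp2 p) :
    hform p n x y = ∑ j, x j * (p : Qp2 p) ^ ε j * frob p (y j) := by
  simp [hform, hgram, Matrix.diagonal_apply]

lemma dualLat_diagLat (hgram : gram p n = Matrix.diagonal fun j => (p : Qp2 p) ^ ε j)
    (e : Fin n → ℤ) :
    dualLat p n (diagLat p n e) = diagLat p n fun j => -e j - ε j := by
  ext z
  rw [mem_diagLat_iff]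
  constructor
  · intro hz j
    have h := hz _ (Submodule.subset_span ⟨j, rfl⟩)
    rw [hform_eq_sum hgram, ← mem_pPow_zero_iff] at h
    simp [Pi.single_apply, apply_ite (frob p)] at h
    rwa [mul_assoc, ← zpow_add₀ (natCast_p_ne_zero p), mul_comm, zpow_mul_mem_pPow_iff,
      zero_sub, neg_add, add_comm] at h
  · intro hz w hw
    rw [hform_eq_sum hgram, ← mem_pPow_zero_iff]
    refine Submodule.sum_mem _ fun j _ => ?_
    have h := mul_mem_pPow (mul_mem_pPow (hz j) (zpow_mem_pPow (ε j)))
      (frob_mem_pPow (mem_diagLat_iff.1 hw j))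
    rwa [show -e j - ε j + ε j + e j = 0 by ring] at h

lemma diagLat_sandwich_iff (hgram : gram p n = Matrix.diagonal fun j => (p : Qp2 p) ^ ε j)
    (i : ℤ) (e : Fin n → ℤ) :
    (scaleLat p n ((p : Qp2 p) ^ (i + 1)) (dualLat p n (diagLat p n e)) ≤ diagLat p n e ∧
      diagLat p n e ≤ scaleLat p n ((p : Qp2 p) ^ i) (dualLat p n (diagLat p n e))) ↔
    ∀ j, i ≤ 2 * e j + ε j ∧ 2 * e j + ε j ≤ i + 1 := by
  simp only [dualLat_diagLat hgram, scaleLat_zpow_diagLat, diagLat_le_diagLat_iff, ← forall_and]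
  exact forall_congr' fun j => by omega

lemma eq_diagLat_of_le_diagLat (hgram : gram p n = Matrix.diagonal fun j => (p : Qp2 p) ^ ε j)
    {i : ℤ} {e : Fin n → ℤ} (j₀ : Fin n)
    (he : ∀ j, i ≤ 2 * e j + ε j) (he₀ : ∀ j ≠ j₀, 2 * e j + ε j = i + 1)
    {Λ : Submodule (Zp2 p) (Fin n → Qp2 p)}
    (hdual : scaleLat p n ((p : Qp2 p) ^ (i + 1)) (dualLat p n Λ) ≤ Λ) (hle : Λ ≤ diagLat p n e) :
    Λ = diagLat p n e := by
  have hdual_le {M : Submodule (Zp2 p) (Fin n → Qp2 p)} (hM : Λ ≤ M) :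
      scaleLat p n ((p : Qp2 p) ^ (i + 1)) (dualLat p n M) ≤ Λ :=
    (scaleLat_mono (dualLat_antitone hM)).trans hdual
  refine le_antisymm hle (diagLat_le_of_not_le_update (j₀ := j₀) hle ((hdual_le hle).trans' ?_)
    fun hM => ?_)
  · rw [dualLat_diagLat hgram, scaleLat_zpow_diagLat, diagLat_le_diagLat_iff]
    intro j
    rcases eq_or_ne j j₀ with rfl | hj
    · simp only [Function.update_self]
      linarith [he j]
    · simp only [Function.update_of_ne hj]
      linarith [he₀ j hj]
  · have h := (hdual_le hM).trans hM
    rw [dualLat_diagLat hgram, scaleLat_zpow_diagLat, diagLat_le_diagLat_iff] at h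
    have h₀ := h j₀
    simp only [Function.update_self] at h₀
    linarith [he j₀]

end Diagonal

lemma gram_one : gram p 1 = Matrix.diagonal fun _ => (p : Qp2 p) ^ (0 : ℤ) := by
  ext i j
  fin_cases i
  fin_cases j
  simp [gram]

lemma gram_two : gram p 2 = Matrix.diagonal fun j => (p : Qp2 p) ^ (![0, 1] j : ℤ) := by
  ext i j
  fin_cases i <;> fin_cases j <;> norm_num [gram]

lemma le_diagLat_one {i : ℤ} {Λ : Submodule (Zp2 p) (Fin 1 → Qp2 p)}
    (hΛ : Λ ≤ scaleLat p 1 ((p : Qp2 p) ^ i) (dualLat p 1 Λ)) :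
    Λ ≤ diagLat p 1 fun _ => (i + 1) / 2 := fun x hx => by
  have h := hform_self_mem_pPow hΛ hx
  rw [hform_eq_sum gram_one, Fin.sum_univ_one, zpow_zero, mul_one,
    mul_frob_self_mem_pPow_iff] at h
  exact mem_diagLat_iff.2 fun j => Fin.fin_one_eq_zero j ▸ h

lemma le_diagLat_two {i : ℤ} {Λ : Submodule (Zp2 p) (Fin 2 → Qp2 p)}
    (hΛ : Λ ≤ scaleLat p 2 ((p : Qp2 p) ^ i) (dualLat p 2 Λ)) :
    Λ ≤ diagLat p 2 fun j => if j = 0 then (i + 1) / 2 else i / 2 := fun x hx => by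
  have h := hform_self_mem_pPow hΛ hx
  rw [hform_eq_sum gram_two, Fin.sum_univ_two] at h
  obtain ⟨h0, h1⟩ := mem_pPow_of_mul_frob_self_add_mem_pPow (x := x 0) (y := x 1)
    (by convert h using 1; simp; ring)
  exact mem_diagLat_iff.2 fun j => by fin_cases j <;> simpa

end Lattices

/-- In the anisotropic hermitian spaces of dimensions 1 and 2
(realized as `𝐕` for `n = 1`, with form `{x,y} = x·σ(y)`, resp. `n = 2`, with
orthogonal basis `f₀, f₁` of square-lengths `1, p`), the unique lattice `Λ'` with
`p^{i+1}(Λ')^∨ ⊆ Λ' ⊆ p^{i}(Λ')^∨` is `p^{⌊(i+1)/2⌋}ℤ_{p²}`, resp.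
`p^{⌊(i+1)/2⌋}ℤ_{p²}·f₀ ⊕ p^{⌊i/2⌋}ℤ_{p²}·f₁`. -/
theorem statement9 (p : ℕ) [Fact p.Prime] (i : ℤ) :
    (∀ Λ : Submodule (Zp2 p) (Fin 1 → Qp2 p),
      (IsLattice p 1 Λ ∧
        scaleLat p 1 ((p : Qp2 p) ^ (i + 1)) (dualLat p 1 Λ) ≤ Λ ∧
        Λ ≤ scaleLat p 1 ((p : Qp2 p) ^ i) (dualLat p 1 Λ)) ↔
      Λ = diagLat p 1 (fun _ => (i + 1) / 2)) ∧
    (∀ Λ : Submodule (Zp2 p) (Fin 2 → Qp2 p),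
      (IsLattice p 2 Λ ∧
        scaleLat p 2 ((p : Qp2 p) ^ (i + 1)) (dualLat p 2 Λ) ≤ Λ ∧
        Λ ≤ scaleLat p 2 ((p : Qp2 p) ^ i) (dualLat p 2 Λ)) ↔
      Λ = diagLat p 2 (fun j => if j = 0 then (i + 1) / 2 else i / 2)) := by
  refine ⟨fun Λ => ⟨fun ⟨_, hdual, hΛ⟩ => ?_, ?_⟩, fun Λ => ⟨fun ⟨_, hdual, hΛ⟩ => ?_, ?_⟩⟩
  · exact eq_diagLat_of_le_diagLat gram_one 0 (fun _ => by omega)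
      (fun j hj => absurd (Fin.fin_one_eq_zero j) hj) hdual (le_diagLat_one hΛ)
  · rintro rfl
    exact ⟨isLattice_diagLat _, (diagLat_sandwich_iff gram_one i _).2 fun _ => by omega⟩
  · obtain ⟨j₀, he₀⟩ : ∃ j₀ : Fin 2, ∀ j ≠ j₀,
        2 * (if j = 0 then (i + 1) / 2 else i / 2) + ![0, 1] j = i + 1 := by
      rcases Int.emod_two_eq_zero_or_one i with h | h
      · exact ⟨0, fun j hj => by fin_cases j <;> simp at hj ⊢; omega⟩
      · exact ⟨1, fun j hj => by fin_cases j <;> simp at hj ⊢; omega⟩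
    exact eq_diagLat_of_le_diagLat gram_two j₀ (fun j => by fin_cases j <;> simp <;> omega)
      he₀ hdual (le_diagLat_two hΛ)
  · rintro rfl
    exact ⟨isLattice_diagLat _, (diagLat_sandwich_iff gram_two i _).2 fun j => by
      fin_cases j <;> simp <;> omega⟩
end
end

section
/- Assume n = 3 or n = 4 (so m = 1 and the maximal type is 3). Let i ∈ ℤ with ni even, let Λ₀ ∈ 𝓛_i be a lattice of type t(Λ₀) = 1, and let Λ, Λ' ∈ 𝓛_i be two distinct lattices of maximal type t(Λ) = t(Λ') = 3 with Λ₀ ⊆ Λ and Λ₀ ⊆ Λ'. Then Λ ∩ Λ' = Λ₀. -/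
/-!
The hermitian space `𝐕 = ℚ_{p²}^n` of the unitary Rapoport–Zink space of signature
`(1,n-1)`, its lattices `𝓛_i` with their types, and the unitary similitude group
`J = GU(𝐕)`.  Here `ℤ_{p²} = W(𝔽_{p²})` and `ℚ_{p²}` is its fraction field; `σ` is
induced by the Witt vector Frobenius.  Writing `m = ⌊(n-1)/2⌋`, the basis
`e_{-m},…,e_{-1},e₀ˣ,e₁,…,e_m` (odd `n`), resp.
`e_{-m},…,e_{-1},e₀ˣ,e₁ˣ,e₁,…,e_m` (even `n`), is indexed by `Fin n` in this order,
and the Gram matrix of the σ-hermitian form `{·,·}` is the antidiagonal matrix for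
odd `n`, resp. the antidiagonal matrix with middle 2×2 block `diag(1,p)` for even `n`.
-/

noncomputable section

/-!
Duality reverses strict inclusions of lattices: every row and column of the Gram matrix has
exactly one nonzero entry, so `{·,·}` is nondegenerate; a lattice is the `ℤ_{p²}`-span of a
`ℚ_{p²}`-basis, its dual is the span of the dual basis, and hence `M^∨∨ = M`.
So if `Λ₀ ⊊ Y ⊊ M` with `Λ₀ ∈ 𝓛_i`, the chain `p^{i+1}M^∨ ⊊ p^{i+1}Λ₀^∨ ⊊ Λ₀ ⊊ Y ⊊ M`
gives `t(M) ≥ 4`: a lattice of type 3 has no lattice strictly between itself and a lattice of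
`𝓛_i` it contains. Applied to `Λ₀ ⊆ Λ ∩ Λ' ⊆ Λ`, either `Λ ∩ Λ' = Λ₀` or `Λ ⊆ Λ'`; in the
latter case, applied to `Λ₀ ⊆ Λ ⊊ Λ'`, it forces `Λ = Λ₀`.
-/

open Module Submodule

namespace UnitaryLattice

variable {p : ℕ} [Fact p.Prime] {n : ℕ}

instance : IsDiscreteValuationRing (Zp2 p) := WittVector.isDiscreteValuationRing

lemma natCast_ne_zero : (p : Qp2 p) ≠ 0 := by
  simpa using (IsFractionRing.injective (Zp2 p) (Qp2 p)).ne (WittVector.p_nonzero p _)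

lemma frob_algebraMap (r : Zp2 p) :
    frob p (algebraMap (Zp2 p) (Qp2 p) r) =
      algebraMap (Zp2 p) (Qp2 p) (WittVector.frobeniusEquiv p (GaloisField p 2) r) :=
  IsFractionRing.ringEquivOfRingEquiv_algebraMap _ _

lemma frobeniusEquiv_involutive :
    Function.Involutive (WittVector.frobeniusEquiv p (GaloisField p 2)) := by
  intro x
  ext k
  let : Fintype (GaloisField p 2) := Fintype.ofFinite _
  have hcard : Fintype.card (GaloisField p 2) = p ^ 2 := by
    rw [← Nat.card_eq_fintype_card, GaloisField.card p 2 two_ne_zero]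
  simp only [WittVector.frobeniusEquiv_apply, WittVector.coeff_frobenius_charP, ← pow_mul,
    ← sq, ← hcard, FiniteField.pow_card]

lemma frob_involutive : Function.Involutive (frob p) := by
  intro x
  obtain ⟨a, s, -, rfl⟩ := IsFractionRing.div_surjective (A := Zp2 p) x
  simp only [map_div₀, frob_algebraMap, frobeniusEquiv_involutive _]

lemma gram_symm (i j : Fin n) : gram p n i j = gram p n j i := by
  have hi := i.isLt
  have hj := j.isLt
  simp only [gram, Matrix.of_apply, Nat.odd_iff]
  split_ifs <;> first | rfl | omega

lemma frob_gram (i j : Fin n) : frob p (gram p n i j) = gram p n i j := by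
  simp only [gram, Matrix.of_apply]
  split_ifs <;> simp

lemma exists_gram_ne_zero_col_eq_zero (k : Fin n) :
    ∃ j, gram p n k j ≠ 0 ∧ ∀ i, i ≠ k → gram p n i j = 0 := by
  have hp := natCast_ne_zero (p := p)
  have hk := k.isLt
  -- `e₀ˣ, e₁ˣ` pair only with themselves; every other basis vector pairs only with its mirror
  by_cases hmid : n % 2 = 0 ∧ ((k : ℕ) = (n - 2) / 2 ∨ (k : ℕ) = (n - 2) / 2 + 1)
  · refine ⟨k, ?_, fun i hi => ?_⟩
    · simp only [gram, Matrix.of_apply, Nat.odd_iff]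
      split_ifs <;> first | omega | simp
    · simp only [gram, Matrix.of_apply, Nat.odd_iff]
      have hi' := i.isLt
      rw [Ne, Fin.ext_iff] at hi
      split_ifs <;> first | omega | rfl
  · refine ⟨k.rev, ?_, fun i hi => ?_⟩
    · simp only [gram, Matrix.of_apply, Fin.val_rev, Nat.odd_iff]
      split_ifs <;> first | omega | simp
    · simp only [gram, Matrix.of_apply, Fin.val_rev, Nat.odd_iff]
      have hi' := i.isLt
      rw [Ne, Fin.ext_iff] at hi
      split_ifs <;> first | omega | rfl

lemma hform_add_left (x x' y : Fin n → Qp2 p) :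
    hform p n (x + x') y = hform p n x y + hform p n x' y := by
  simp only [hform, Pi.add_apply, add_mul, Finset.sum_add_distrib]

lemma hform_smul_left (c : Qp2 p) (x y : Fin n → Qp2 p) :
    hform p n (c • x) y = c * hform p n x y := by
  simp only [hform, Finset.mul_sum, Pi.smul_apply, smul_eq_mul, mul_assoc]

lemma hform_add_right (x y y' : Fin n → Qp2 p) :
    hform p n x (y + y') = hform p n x y + hform p n x y' := by
  simp only [hform, Pi.add_apply, map_add, mul_add, Finset.sum_add_distrib]

lemma hform_smul_right (c : Qp2 p) (x y : Fin n → Qp2 p) :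
    hform p n x (c • y) = frob p c * hform p n x y := by
  simp only [hform, Finset.mul_sum, Pi.smul_apply, smul_eq_mul, map_mul]
  exact Finset.sum_congr rfl fun _ _ => Finset.sum_congr rfl fun _ _ => by ring

lemma frob_hform (x y : Fin n → Qp2 p) : frob p (hform p n x y) = hform p n y x := by
  simp only [hform, map_sum, map_mul, frob_gram, frob_involutive _]
  rw [Finset.sum_comm]
  exact Finset.sum_congr rfl fun i _ => Finset.sum_congr rfl fun j _ => by
    rw [gram_symm]; ring

lemma eq_zero_of_forall_hform_eq_zero {v : Fin n → Qp2 p} (h : ∀ w, hform p n v w = 0) :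
    v = 0 := by
  funext k
  obtain ⟨j, hkj, hcol⟩ := exists_gram_ne_zero_col_eq_zero (p := p) k
  have hsingle : hform p n v (Pi.single j 1) = v k * gram p n k j := by
    simp only [hform, Pi.single_apply, apply_ite (frob p), map_one, map_zero, mul_ite, mul_one,
      mul_zero, Finset.sum_ite_eq', Finset.mem_univ, if_true]
    exact Finset.sum_eq_single k (fun i _ hi => by rw [hcol i hi, mul_zero]) (by simp)
  simpa [hkj] using hsingle.symm.trans (h _)

variable (p n) in
def sesqForm :
    (Fin n → Qp2 p) →ₗ[Qp2 p] (Fin n → Qp2 p) →ₛₗ[(frob p : Qp2 p →+* Qp2 p)] Qp2 p :=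
  LinearMap.mk₂'ₛₗ _ _ (hform p n) hform_add_left hform_smul_left hform_add_right
    hform_smul_right

lemma sesqForm_apply (x y : Fin n → Qp2 p) : sesqForm p n x y = hform p n x y := rfl

def hformPairing (b : Basis (Fin n) (Qp2 p) (Fin n → Qp2 p)) :
    (Fin n → Qp2 p) →ₗ[Qp2 p] (Fin n → Qp2 p) :=
  LinearMap.pi fun k => (sesqForm p n).flip (b k)

lemma hformPairing_injective (b : Basis (Fin n) (Qp2 p) (Fin n → Qp2 p)) :
    Function.Injective (hformPairing b) := by
  rw [← LinearMap.ker_eq_bot, LinearMap.ker_eq_bot']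
  intro v hv
  have hzero : sesqForm p n v = 0 := b.ext fun k => congrFun hv k
  exact eq_zero_of_forall_hform_eq_zero fun w => LinearMap.congr_fun hzero w

def dualBasis (b : Basis (Fin n) (Qp2 p) (Fin n → Qp2 p)) :
    Basis (Fin n) (Qp2 p) (Fin n → Qp2 p) :=
  (Pi.basisFun _ _).map (LinearEquiv.ofInjectiveEndo _ (hformPairing_injective b)).symm

lemma dualBasis_repr_apply (b : Basis (Fin n) (Qp2 p) (Fin n → Qp2 p)) (v : Fin n → Qp2 p)
    (k : Fin n) : (dualBasis b).repr v k = hform p n v (b k) := by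
  simp [dualBasis, hformPairing, sesqForm_apply]

lemma repr_eq_hform_dualBasis (b : Basis (Fin n) (Qp2 p) (Fin n → Qp2 p)) (v : Fin n → Qp2 p)
    (j : Fin n) : b.repr v j = hform p n v (dualBasis b j) := by
  have : b.coord j = (sesqForm p n).flip (dualBasis b j) := b.ext fun k => by
    rw [LinearMap.flip_apply, sesqForm_apply, ← frob_hform, ← dualBasis_repr_apply,
      Basis.repr_self, Basis.coord_apply, Basis.repr_self, Finsupp.single_apply,
      Finsupp.single_apply]
    split_ifs with h₁ h₂ <;> simp_all [eq_comm]
  exact LinearMap.congr_fun this v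

lemma mem_dualLat_span_iff (b : Basis (Fin n) (Qp2 p) (Fin n → Qp2 p)) (v : Fin n → Qp2 p) :
    v ∈ dualLat p n (span (Zp2 p) (Set.range b)) ↔
      ∀ k, hform p n v (b k) ∈ (algebraMap (Zp2 p) (Qp2 p)).range := by
  refine ⟨fun hv k => hv (b k) (subset_span ⟨k, rfl⟩), fun hv w hw => ?_⟩
  induction hw using span_induction with
  | mem x hx => obtain ⟨k, rfl⟩ := hx; exact hv k
  | zero => simpa only [← sesqForm_apply, map_zero] using zero_mem _
  | add x y _ _ hx hy => rw [hform_add_right]; exact add_mem hx hy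
  | smul r x _ hx =>
      rw [← algebraMap_smul (Qp2 p) r x, hform_smul_right, frob_algebraMap]
      exact mul_mem ⟨_, rfl⟩ hx

lemma dualLat_span_eq (b c : Basis (Fin n) (Qp2 p) (Fin n → Qp2 p))
    (h : ∀ v k, c.repr v k = hform p n v (b k)) :
    dualLat p n (span (Zp2 p) (Set.range b)) = span (Zp2 p) (Set.range c) := by
  ext v
  simp only [mem_dualLat_span_iff, c.mem_span_iff_repr_mem (Zp2 p), h, RingHom.mem_range,
    Set.mem_range]

lemma exists_basis_of_isLattice {M : Submodule (Zp2 p) (Fin n → Qp2 p)}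
    (hM : IsLattice p n M) :
    ∃ b : Basis (Fin n) (Qp2 p) (Fin n → Qp2 p), M = span (Zp2 p) (Set.range b) := by
  obtain ⟨hfg, hspan⟩ := hM
  have : Module.Finite (Zp2 p) M := Module.Finite.iff_fg.mpr hfg
  let bM := Module.Free.chooseBasis (Zp2 p) M
  have hli : LinearIndependent (Qp2 p) (M.subtype ∘ bM) :=
    (LinearIndependent.iff_fractionRing (Zp2 p) (Qp2 p)).mp
      (bM.linearIndependent.map' M.subtype M.ker_subtype)
  have hspanM : span (Zp2 p) (Set.range (M.subtype ∘ bM)) = M := by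
    rw [Set.range_comp, ← map_span, bM.span_eq, map_subtype_top]
  have hspanK : ⊤ ≤ span (Qp2 p) (Set.range (M.subtype ∘ bM)) := by
    rw [← hspan, span_le]
    conv_lhs => rw [← hspanM]
    exact span_le_restrictScalars (Zp2 p) (Qp2 p) _
  let b := Basis.mk hli hspanK
  refine ⟨b.reindex (b.indexEquiv (Pi.basisFun _ _)), ?_⟩
  rw [Basis.range_reindex, Basis.coe_mk, hspanM]

lemma dualLat_dualLat {M : Submodule (Zp2 p) (Fin n → Qp2 p)} (hM : IsLattice p n M) :
    dualLat p n (dualLat p n M) = M := by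
  obtain ⟨b, rfl⟩ := exists_basis_of_isLattice hM
  rw [dualLat_span_eq b (dualBasis b) (dualBasis_repr_apply b),
    dualLat_span_eq (dualBasis b) b (repr_eq_hform_dualBasis b)]

lemma dualLat_antitone : Antitone (dualLat p n) := fun _ _ h _ hv w hw => hv w (h hw)

lemma dualLat_lt_dualLat {L M : Submodule (Zp2 p) (Fin n → Qp2 p)} (hL : IsLattice p n L)
    (hM : IsLattice p n M) (h : L < M) : dualLat p n M < dualLat p n L :=
  (dualLat_antitone h.le).lt_of_ne fun he => h.ne <| by
    rw [← dualLat_dualLat hL, ← dualLat_dualLat hM, he]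

lemma scaleLat_strictMono {c : Qp2 p} (hc : c ≠ 0) : StrictMono (scaleLat p n c) :=
  map_strictMono_of_injective (smul_right_injective _ hc)

lemma comap_subtype_lt_comap_subtype {R M : Type*} [Ring R] [AddCommGroup M] [Module R M]
    {L Y Y' : Submodule R M} (h : Y < Y') (hY' : Y' ≤ L) :
    comap L.subtype Y < comap L.subtype Y' := by
  rw [lt_iff_le_not_ge, comap_subtype_le_iff, comap_subtype_le_iff, inf_eq_right.mpr hY',
    inf_eq_right.mpr (h.le.trans hY')]
  exact lt_iff_le_not_ge.mp h

lemma natCast_le_relIdx {k : ℕ} (f : Fin (k + 1) → Submodule (Zp2 p) (Fin n → Qp2 p))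
    (hf : StrictMono f) {B L : Submodule (Zp2 p) (Fin n → Qp2 p)} (hB : B ≤ f 0)
    (hL : f (Fin.last k) ≤ L) : (k : ℕ∞) ≤ relIdx p n B L := by
  set Q := comap L.subtype B
  have hfL : ∀ j, f j ≤ L := fun j => (hf.monotone (Fin.le_last j)).trans hL
  have hQ : ∀ j, Q ≤ comap L.subtype (f j) := fun j =>
    comap_mono (hB.trans (hf.monotone (Fin.zero_le j)))
  let s : LTSeries (Submodule (Zp2 p) (L ⧸ Q)) :=
    { length := k
      toFun := fun j => (comapMkQRelIso Q).symm ⟨_, hQ j⟩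
      step := fun j => (comapMkQRelIso Q).symm.strictMono <| Subtype.mk_lt_mk.mpr <|
        comap_subtype_lt_comap_subtype (hf j.castSucc_lt_succ) (hfL _) }
  have hdim : (k : WithBot ℕ∞) ≤ Order.krullDim (Submodule (Zp2 p) (L ⧸ Q)) :=
    Order.LTSeries.length_le_krullDim s
  obtain ⟨d, hd⟩ := WithBot.ne_bot_iff_exists.mp (ne_bot_of_le_ne_bot (by simp) hdim)
  rw [relIdx, mlen, ← hd, WithBot.unbotD_coe]
  rw [← hd] at hdim
  exact_mod_cast hdim

lemma eq_or_eq_of_typeOf_eq_three {i : ℤ} {Λ₀ M Y : Submodule (Zp2 p) (Fin n → Qp2 p)}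
    (hΛ₀ : inL p n i Λ₀) (hM : IsLattice p n M) (htM : typeOf p n i M = 3) (h₀ : Λ₀ ≤ Y)
    (hYM : Y ≤ M) : Y = Λ₀ ∨ Y = M := by
  by_contra! hne
  have h₀Y : Λ₀ < Y := h₀.lt_of_ne (Ne.symm hne.1)
  have hYM : Y < M := hYM.lt_of_ne hne.2
  have hdual := scaleLat_strictMono (zpow_ne_zero (i + 1) natCast_ne_zero)
    (dualLat_lt_dualLat hΛ₀.1 hM (h₀Y.trans hYM))
  let chain : Fin 5 → Submodule (Zp2 p) (Fin n → Qp2 p) :=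
    ![scaleLat p n ((p : Qp2 p) ^ (i + 1)) (dualLat p n M),
      scaleLat p n ((p : Qp2 p) ^ (i + 1)) (dualLat p n Λ₀), Λ₀, Y, M]
  have hchain : StrictMono chain := Fin.strictMono_iff_lt_succ.mpr fun j => by
    fin_cases j
    exacts [hdual, hΛ₀.2.1, h₀Y, hYM]
  have hlen := natCast_le_relIdx chain hchain le_rfl le_rfl
  change _ ≤ typeOf p n i M at hlen
  rw [htM] at hlen
  norm_num at hlen

end UnitaryLattice

theorem statement16_general (p : ℕ) [Fact p.Prime] (n : ℕ) (i : ℤ)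
    (Λ₀ Λ Λ' : Submodule (Zp2 p) (Fin n → Qp2 p))
    (hΛ₀ : inL p n i Λ₀)
    (hΛ : inL p n i Λ) (ht : typeOf p n i Λ = 3)
    (hΛ' : inL p n i Λ') (ht' : typeOf p n i Λ' = 3)
    (hne : Λ ≠ Λ') (hsub : Λ₀ ≤ Λ) (hsub' : Λ₀ ≤ Λ') :
    Λ ⊓ Λ' = Λ₀ := by
  rcases UnitaryLattice.eq_or_eq_of_typeOf_eq_three hΛ₀ hΛ.1 ht (le_inf hsub hsub') inf_le_left
    with h | h
  · exact h
  have hle : Λ ≤ Λ' := h ▸ inf_le_right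
  rcases UnitaryLattice.eq_or_eq_of_typeOf_eq_three hΛ₀ hΛ'.1 ht' hsub hle with h' | h'
  · rw [h, h']
  · exact absurd h' hne

/-- **Statement 16.**  For `n = 3` or `n = 4`: if `Λ₀ ∈ 𝓛_i` has type `1` and
`Λ ≠ Λ'` in `𝓛_i` both have maximal type `3` and contain `Λ₀`, then `Λ ∩ Λ' = Λ₀`. -/
theorem statement16 (p : ℕ) [Fact p.Prime] (n : ℕ) (h34 : n = 3 ∨ n = 4) (i : ℤ)
    (hi : Even ((n : ℤ) * i)) (Λ₀ Λ Λ' : Submodule (Zp2 p) (Fin n → Qp2 p))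
    (hΛ₀ : inL p n i Λ₀) (ht₀ : typeOf p n i Λ₀ = 1)
    (hΛ : inL p n i Λ) (ht : typeOf p n i Λ = 3)
    (hΛ' : inL p n i Λ') (ht' : typeOf p n i Λ' = 3)
    (hne : Λ ≠ Λ') (hsub : Λ₀ ≤ Λ) (hsub' : Λ₀ ≤ Λ') :
    Λ ⊓ Λ' = Λ₀ :=
  statement16_general p n i Λ₀ Λ Λ' hΛ₀ hΛ ht hΛ' ht' hne hsub hsub'
end
end
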